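/- Design-based coverage: Fix N, 0 < N₁ < N, α ∈ (0,1), and bounds y_min < y_max. For each realized assignment x and induced observed data, let K(α) be the smallest K ≥ 0 with p̲(K) ≥ 1 − α (a data-dependent quantity), and let C(x) = Θ_I(K(α)) be the corresponding identified-set interval for ATE. Then for every pair of potential-outcome vectors Y(1), Y(0) ∈ [y_min, y_max]^N, the design probability P_design(ATE(Y(1),Y(0)) ∈ C(X^new)) ≥ 1 − α, where X^new is uniform over assignments with exactly N₁ treated units. In other words, C is a uniformly valid finite-population (1−α) confidence set. -/

import Mathlib

open Finset

attribute [local instance] Classical.propDecidable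

def grp (N : ℕ) (X : Fin N → Bool) (b : Bool) : Finset (Fin N) :=
  Finset.univ.filter (fun i => X i = b)

noncomputable def gmean (N : ℕ) (X : Fin N → Bool) (b : Bool) (A : Fin N → ℝ) : ℝ :=
  (∑ i ∈ grp N X b, A i) / ((grp N X b).card : ℝ)

/-- Difference in means of `A` across the two groups of assignment `x`. -/
noncomputable def DIM (N : ℕ) (A : Fin N → ℝ) (x : Fin N → Bool) : ℝ :=
  gmean N x true A - gmean N x false A

/-- Support of the uniform randomization design: assignments with exactly `N₁` treated. -/
def Assign (N N₁ : ℕ) : Finset (Fin N → Bool) :=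
  Finset.univ.filter (fun x => (grp N x true).card = N₁)

/-- Design probability of an event under uniform randomization. -/
noncomputable def designProb (N N₁ : ℕ) (E : (Fin N → Bool) → Prop) : ℝ :=
  (((Assign N N₁).filter E).card : ℝ) / ((Assign N N₁).card : ℝ)

/-- Worst-case design probability of `K`-approximate mean balance, given realized
assignment `X` and observed outcomes `Yobs`. -/
noncomputable def pbar (N N₁ : ℕ) (ymin ymax : ℝ) (X : Fin N → Bool) (Yobs : Fin N → ℝ)
    (K : ℝ) : ℝ :=
  sInf {p : ℝ | ∃ Y1 Y0 : Fin N → ℝ,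
    (∀ i, Y1 i ∈ Set.Icc ymin ymax) ∧ (∀ i, Y0 i ∈ Set.Icc ymin ymax) ∧
    (∀ i, X i = true → Y1 i = Yobs i) ∧ (∀ i, X i = false → Y0 i = Yobs i) ∧
    p = designProb N N₁ (fun xnew => |DIM N Y1 xnew| ≤ K ∧ |DIM N Y0 xnew| ≤ K)}


/-- Observed outcome vector induced by assignment `x` from the true potential outcomes. -/
noncomputable def obs (N : ℕ) (Y1 Y0 : Fin N → ℝ) (x : Fin N → Bool) : Fin N → ℝ :=
  fun i => if x i then Y1 i else Y0 i

noncomputable def LB (N : ℕ) (x : Fin N → Bool) (ymin : ℝ) (K : ℝ) (b : Bool)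
    (Yobs : Fin N → ℝ) : ℝ :=
  gmean N x b Yobs * ((grp N x b).card : ℝ) / N
    + max ymin (gmean N x b Yobs - K) * ((grp N x (!b)).card : ℝ) / N

noncomputable def UB (N : ℕ) (x : Fin N → Bool) (ymax : ℝ) (K : ℝ) (b : Bool)
    (Yobs : Fin N → ℝ) : ℝ :=
  gmean N x b Yobs * ((grp N x b).card : ℝ) / N
    + min ymax (gmean N x b Yobs + K) * ((grp N x (!b)).card : ℝ) / N

/-- The data-dependent calibrated sensitivity parameter `K(α)` for assignment `x`. -/
noncomputable def Kalpha (N N₁ : ℕ) (ymin ymax : ℝ) (α : ℝ) (Y1 Y0 : Fin N → ℝ)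
    (x : Fin N → Bool) : ℝ :=
  sInf {K : ℝ | 0 ≤ K ∧ pbar N N₁ ymin ymax x (obs N Y1 Y0 x) K ≥ 1 - α}

/-- The confidence set `C(x) = Θ_I(K(α))` computed from the data induced by `x`. -/
noncomputable def Cset (N N₁ : ℕ) (ymin ymax : ℝ) (α : ℝ) (Y1 Y0 : Fin N → ℝ)
    (x : Fin N → Bool) : Set ℝ :=
  Set.Icc
    (LB N x ymin (Kalpha N N₁ ymin ymax α Y1 Y0 x) true (obs N Y1 Y0 x)
      - UB N x ymax (Kalpha N N₁ ymin ymax α Y1 Y0 x) false (obs N Y1 Y0 x))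
    (UB N x ymax (Kalpha N N₁ ymin ymax α Y1 Y0 x) true (obs N Y1 Y0 x)
      - LB N x ymin (Kalpha N N₁ ymin ymax α Y1 Y0 x) false (obs N Y1 Y0 x))


section Aux

lemma grp_card_add (N : ℕ) (x : Fin N → Bool) :
    (grp N x true).card + (grp N x false).card = N := by
  have := Finset.card_filter_add_card_filter_not (s := (univ : Finset (Fin N)))
    (p := fun i => x i = true)
  simp only [Bool.not_eq_true] at this
  simpa [grp] using this

lemma grp_card_true (N N₁ : ℕ) (x : Fin N → Bool) (hx : x ∈ Assign N N₁) :
    (grp N x true).card = N₁ := by simpa [Assign] using hx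

lemma grp_card_false (N N₁ : ℕ) (x : Fin N → Bool) (hx : x ∈ Assign N N₁) :
    (grp N x false).card = N - N₁ := by
  have h1 := grp_card_true N N₁ x hx
  have := grp_card_add N x
  omega

lemma grp_ne (N N₁ : ℕ) (hN₁pos : 0 < N₁) (hN₁lt : N₁ < N) (x : Fin N → Bool)
    (hx : x ∈ Assign N N₁) (b : Bool) : (grp N x b).Nonempty := by
  rw [← Finset.card_pos]
  cases b
  · rw [grp_card_false N N₁ x hx]; omega
  · rw [grp_card_true N N₁ x hx]; omega

lemma sum_grp_split (N : ℕ) (x : Fin N → Bool) (A : Fin N → ℝ) (b : Bool) :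
    ∑ i, A i = ∑ i ∈ grp N x b, A i + ∑ i ∈ grp N x (!b), A i := by
  rw [← Finset.sum_filter_add_sum_filter_not univ (fun i => x i = b) A]
  congr 1
  apply Finset.sum_congr _ (fun _ _ => rfl)
  ext i; cases b <;> simp [grp]

lemma gmean_mem_Icc (N : ℕ) (x : Fin N → Bool) (b : Bool) (A : Fin N → ℝ) (a c : ℝ)
    (h : (grp N x b).Nonempty) (hA : ∀ i, A i ∈ Set.Icc a c) :
    gmean N x b A ∈ Set.Icc a c := by
  have hc : (0:ℝ) < ((grp N x b).card : ℝ) := by exact_mod_cast Finset.card_pos.mpr h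
  constructor
  · rw [gmean, le_div_iff₀ hc]
    calc a * ((grp N x b).card : ℝ) = ∑ _i ∈ grp N x b, a := by
          simp [mul_comm]
      _ ≤ ∑ i ∈ grp N x b, A i := Finset.sum_le_sum (fun i _ => (hA i).1)
  · rw [gmean, div_le_iff₀ hc]
    calc ∑ i ∈ grp N x b, A i ≤ ∑ _i ∈ grp N x b, c :=
          Finset.sum_le_sum (fun i _ => (hA i).2)
      _ = c * ((grp N x b).card : ℝ) := by simp [mul_comm]

lemma gmean_congr (N : ℕ) (x : Fin N → Bool) (b : Bool) (A B : Fin N → ℝ)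
    (h : ∀ i, x i = b → A i = B i) : gmean N x b A = gmean N x b B := by
  unfold gmean
  congr 1
  exact Finset.sum_congr rfl (fun i hi => h i (by simpa [grp] using hi))

lemma abs_DIM_le (N : ℕ) (x : Fin N → Bool) (A : Fin N → ℝ) (ymin ymax : ℝ)
    (h1 : (grp N x true).Nonempty) (h0 : (grp N x false).Nonempty)
    (hA : ∀ i, A i ∈ Set.Icc ymin ymax) : |DIM N A x| ≤ ymax - ymin := by
  have a1 := gmean_mem_Icc N x true A ymin ymax h1 hA
  have a0 := gmean_mem_Icc N x false A ymin ymax h0 hA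
  rw [DIM, abs_le]
  constructor <;> [linarith [a1.1, a0.2]; linarith [a1.2, a0.1]]

lemma designProb_nonneg (N N₁ : ℕ) (E : (Fin N → Bool) → Prop) :
    0 ≤ designProb N N₁ E := by
  unfold designProb; positivity

lemma designProb_mono (N N₁ : ℕ) (E F : (Fin N → Bool) → Prop)
    (h : ∀ x ∈ Assign N N₁, E x → F x) :
    designProb N N₁ E ≤ designProb N N₁ F := by
  unfold designProb
  have hsub : (Assign N N₁).filter E ⊆ (Assign N N₁).filter F := by
    intro x hx
    rw [Finset.mem_filter] at *
    exact ⟨hx.1, h x hx.1 hx.2⟩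
  have hc := Finset.card_le_card hsub
  rcases Nat.eq_zero_or_pos (Assign N N₁).card with h0 | h0
  · simp [h0]
  · have : (0:ℝ) < ((Assign N N₁).card : ℝ) := by exact_mod_cast h0
    gcongr ?_ / _
    exact_mod_cast hc

lemma designProb_eq_one (N N₁ : ℕ) (E : (Fin N → Bool) → Prop)
    (hne : (Assign N N₁).Nonempty) (h : ∀ x ∈ Assign N N₁, E x) :
    designProb N N₁ E = 1 := by
  unfold designProb
  rw [Finset.filter_true_of_mem h, div_self]
  exact_mod_cast Finset.card_pos.mpr hne |>.ne'

lemma Assign_nonempty (N N₁ : ℕ) (h : N₁ < N) : (Assign N N₁).Nonempty := by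
  refine ⟨fun i => decide ((i : ℕ) < N₁), ?_⟩
  simp only [Assign, Finset.mem_filter, Finset.mem_univ, true_and]
  have : grp N (fun i => decide ((i : ℕ) < N₁)) true = Finset.Iio ⟨N₁, h⟩ := by
    ext i; simp [grp, Fin.lt_def]
  rw [this, Fin.card_Iio]

lemma pbarSet_bddBelow (N N₁ : ℕ) (ymin ymax : ℝ) (X : Fin N → Bool) (Yobs : Fin N → ℝ)
    (K : ℝ) : BddBelow {p : ℝ | ∃ Y1 Y0 : Fin N → ℝ,
    (∀ i, Y1 i ∈ Set.Icc ymin ymax) ∧ (∀ i, Y0 i ∈ Set.Icc ymin ymax) ∧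
    (∀ i, X i = true → Y1 i = Yobs i) ∧ (∀ i, X i = false → Y0 i = Yobs i) ∧
    p = designProb N N₁ (fun xnew => |DIM N Y1 xnew| ≤ K ∧ |DIM N Y0 xnew| ≤ K)} := by
  refine ⟨0, fun p hp => ?_⟩
  obtain ⟨Y1', Y0', _, _, _, _, hp⟩ := hp
  rw [hp]; exact designProb_nonneg _ _ _

lemma pbar_le_true (N N₁ : ℕ) (ymin ymax : ℝ) (Y1 Y0 : Fin N → ℝ)
    (hbdd1 : ∀ i, Y1 i ∈ Set.Icc ymin ymax) (hbdd0 : ∀ i, Y0 i ∈ Set.Icc ymin ymax)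
    (x : Fin N → Bool) (K : ℝ) :
    pbar N N₁ ymin ymax x (obs N Y1 Y0 x) K
      ≤ designProb N N₁ (fun xnew => |DIM N Y1 xnew| ≤ K ∧ |DIM N Y0 xnew| ≤ K) := by
  apply csInf_le (pbarSet_bddBelow N N₁ ymin ymax x (obs N Y1 Y0 x) K)
  exact ⟨Y1, Y0, hbdd1, hbdd0,
    fun i hi => by simp [obs, hi], fun i hi => by simp [obs, hi], rfl⟩

lemma pbar_big (N N₁ : ℕ) (hN₁pos : 0 < N₁) (hN₁lt : N₁ < N) (ymin ymax : ℝ)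
    (x : Fin N → Bool) (Yobs : Fin N → ℝ) (hYobs : ∀ i, Yobs i ∈ Set.Icc ymin ymax) :
    pbar N N₁ ymin ymax x Yobs (ymax - ymin) = 1 := by
  have hAne := Assign_nonempty N N₁ hN₁lt
  have hall : ∀ (Y1' Y0' : Fin N → ℝ), (∀ i, Y1' i ∈ Set.Icc ymin ymax) →
      (∀ i, Y0' i ∈ Set.Icc ymin ymax) →
      designProb N N₁ (fun xnew => |DIM N Y1' xnew| ≤ ymax - ymin
        ∧ |DIM N Y0' xnew| ≤ ymax - ymin) = 1 := by
    intro Y1' Y0' h1 h0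
    apply designProb_eq_one _ _ _ hAne
    intro xnew hxnew
    exact ⟨abs_DIM_le N xnew Y1' ymin ymax (grp_ne N N₁ hN₁pos hN₁lt xnew hxnew true)
        (grp_ne N N₁ hN₁pos hN₁lt xnew hxnew false) h1,
      abs_DIM_le N xnew Y0' ymin ymax (grp_ne N N₁ hN₁pos hN₁lt xnew hxnew true)
        (grp_ne N N₁ hN₁pos hN₁lt xnew hxnew false) h0⟩
  unfold pbar
  have hset : {p : ℝ | ∃ Y1 Y0 : Fin N → ℝ,
      (∀ i, Y1 i ∈ Set.Icc ymin ymax) ∧ (∀ i, Y0 i ∈ Set.Icc ymin ymax) ∧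
      (∀ i, x i = true → Y1 i = Yobs i) ∧ (∀ i, x i = false → Y0 i = Yobs i) ∧
      p = designProb N N₁ (fun xnew => |DIM N Y1 xnew| ≤ ymax - ymin
        ∧ |DIM N Y0 xnew| ≤ ymax - ymin)} = {1} := by
    ext p
    constructor
    · rintro ⟨Y1', Y0', h1, h0, _, _, rfl⟩
      exact hall Y1' Y0' h1 h0
    · rintro rfl
      exact ⟨Yobs, Yobs, hYobs, hYobs, fun _ _ => rfl, fun _ _ => rfl,
        (hall Yobs Yobs hYobs hYobs).symm⟩
  rw [hset, csInf_singleton]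

lemma mean_bounds (N : ℕ) (x : Fin N → Bool) (b : Bool) (A Yobs : Fin N → ℝ)
    (ymin ymax K : ℝ)
    (hb : (grp N x b).Nonempty) (hnb : (grp N x (!b)).Nonempty)
    (hA : ∀ i, A i ∈ Set.Icc ymin ymax)
    (hobs : ∀ i, x i = b → A i = Yobs i)
    (hK : |gmean N x b A - gmean N x (!b) A| ≤ K) :
    LB N x ymin K b Yobs ≤ (∑ i, A i) / N ∧ (∑ i, A i) / N ≤ UB N x ymax K b Yobs := by
  have hgb : gmean N x b Yobs = gmean N x b A := (gmean_congr N x b A Yobs hobs).symm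
  have hcb : (0:ℝ) < ((grp N x b).card : ℝ) := by exact_mod_cast Finset.card_pos.mpr hb
  have hcnb : (0:ℝ) < ((grp N x (!b)).card : ℝ) := by
    exact_mod_cast Finset.card_pos.mpr hnb
  have hsum : ∑ i, A i = gmean N x b A * ((grp N x b).card : ℝ)
      + gmean N x (!b) A * ((grp N x (!b)).card : ℝ) := by
    rw [sum_grp_split N x A b, gmean, gmean, div_mul_cancel₀ _ hcb.ne',
      div_mul_cancel₀ _ hcnb.ne']
  have hmem := gmean_mem_Icc N x (!b) A ymin ymax hnb hA
  have habs := abs_le.mp hK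
  have hlow : max ymin (gmean N x b A - K) ≤ gmean N x (!b) A :=
    max_le hmem.1 (by linarith [habs.2])
  have hhigh : gmean N x (!b) A ≤ min ymax (gmean N x b A + K) :=
    le_min hmem.2 (by linarith [habs.1])
  have hN0 : (0:ℝ) ≤ (N:ℝ) := Nat.cast_nonneg N
  unfold LB UB
  rw [hgb, hsum, add_div]
  constructor
  · gcongr
  · gcongr

end Aux


lemma Kstar_mem (N N₁ : ℕ) (α : ℝ) (Y1 Y0 : Fin N → ℝ)
    (hne : {K : ℝ | 0 ≤ K ∧ 1 - α ≤ designProb N N₁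
      (fun xnew => |DIM N Y1 xnew| ≤ K ∧ |DIM N Y0 xnew| ≤ K)}.Nonempty) :
    sInf {K : ℝ | 0 ≤ K ∧ 1 - α ≤ designProb N N₁
      (fun xnew => |DIM N Y1 xnew| ≤ K ∧ |DIM N Y0 xnew| ≤ K)} ∈
    {K : ℝ | 0 ≤ K ∧ 1 - α ≤ designProb N N₁
      (fun xnew => |DIM N Y1 xnew| ≤ K ∧ |DIM N Y0 xnew| ≤ K)} := by
  set S := {K : ℝ | 0 ≤ K ∧ 1 - α ≤ designProb N N₁
      (fun xnew => |DIM N Y1 xnew| ≤ K ∧ |DIM N Y0 xnew| ≤ K)} with hS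
  have hbdd : BddBelow S := ⟨0, fun K hK => hK.1⟩
  set Ks := sInf S with hKs
  have hKs0 : 0 ≤ Ks := le_csInf hne (fun K hK => hK.1)
  set M : (Fin N → Bool) → ℝ := fun x => max |DIM N Y1 x| |DIM N Y0 x| with hM
  set T' : Finset ℝ := ((Assign N N₁).image M).filter (fun t => Ks < t) with hT'
  set δ : ℝ := if h : T'.Nonempty then T'.min' h - Ks else 1 with hδdef
  have hδ : 0 < δ := by
    rw [hδdef]
    split_ifs with h
    · have h2 := (Finset.mem_filter.mp (T'.min'_mem h)).2
      linarith
    · norm_num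
  obtain ⟨K, hKS, hKlt⟩ := exists_lt_of_csInf_lt hne (lt_add_of_pos_right Ks hδ)
  have hKsK : Ks ≤ K := csInf_le hbdd hKS
  refine ⟨hKs0, le_trans hKS.2 (designProb_mono N N₁ _ _ ?_)⟩
  intro x hx hEx
  have hMx : M x ≤ K := max_le hEx.1 hEx.2
  have hMKs : M x ≤ Ks := by
    by_contra hc
    push_neg at hc
    have hmem : M x ∈ T' := by
      rw [hT', Finset.mem_filter]
      exact ⟨Finset.mem_image_of_mem M hx, hc⟩
    have hne' : T'.Nonempty := ⟨M x, hmem⟩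
    have hmin := Finset.min'_le T' (M x) hmem
    have hδeq : δ = T'.min' hne' - Ks := by rw [hδdef, dif_pos hne']
    linarith
  exact ⟨le_trans (le_max_left _ _) hMKs, le_trans (le_max_right _ _) hMKs⟩

/-- design-based uniform coverage of the calibrated identified-set
confidence set. -/
theorem statement12
    (N N₁ : ℕ) (hN : 2 ≤ N) (hN₁pos : 0 < N₁) (hN₁lt : N₁ < N)
    (ymin ymax : ℝ) (hy : ymin < ymax)
    (α : ℝ) (hα0 : 0 < α) (hα1 : α < 1)
    (Y1 Y0 : Fin N → ℝ)
    (hbdd1 : ∀ i, Y1 i ∈ Set.Icc ymin ymax)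
    (hbdd0 : ∀ i, Y0 i ∈ Set.Icc ymin ymax) :
    1 - α ≤ designProb N N₁ (fun xnew =>
      (∑ i, (Y1 i - Y0 i)) / N ∈ Cset N N₁ ymin ymax α Y1 Y0 xnew) := by
  set S := {K : ℝ | 0 ≤ K ∧ 1 - α ≤ designProb N N₁
      (fun xnew => |DIM N Y1 xnew| ≤ K ∧ |DIM N Y0 xnew| ≤ K)} with hS
  have hAne := Assign_nonempty N N₁ hN₁lt
  have hK0 : (ymax - ymin) ∈ S := by
    refine ⟨by linarith, ?_⟩
    rw [designProb_eq_one N N₁ _ hAne ?_]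
    · linarith
    · intro xnew hx
      exact ⟨abs_DIM_le N xnew Y1 ymin ymax (grp_ne N N₁ hN₁pos hN₁lt xnew hx true)
          (grp_ne N N₁ hN₁pos hN₁lt xnew hx false) hbdd1,
        abs_DIM_le N xnew Y0 ymin ymax (grp_ne N N₁ hN₁pos hN₁lt xnew hx true)
          (grp_ne N N₁ hN₁pos hN₁lt xnew hx false) hbdd0⟩
  have hne : S.Nonempty := ⟨_, hK0⟩
  obtain ⟨hKs0, hcov⟩ := Kstar_mem N N₁ α Y1 Y0 hne
  set Ks := sInf S with hKsdef
  have hKalpha : ∀ x : Fin N → Bool, Ks ≤ Kalpha N N₁ ymin ymax α Y1 Y0 x := by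
    intro x
    have hYobs : ∀ i, obs N Y1 Y0 x i ∈ Set.Icc ymin ymax := by
      intro i; unfold obs; split_ifs; exacts [hbdd1 i, hbdd0 i]
    have hBsub : {K : ℝ | 0 ≤ K ∧ pbar N N₁ ymin ymax x (obs N Y1 Y0 x) K ≥ 1 - α}
        ⊆ S := by
      intro K hK
      exact ⟨hK.1, le_trans hK.2 (pbar_le_true N N₁ ymin ymax Y1 Y0 hbdd1 hbdd0 x K)⟩
    have hBne : {K : ℝ | 0 ≤ K ∧
        pbar N N₁ ymin ymax x (obs N Y1 Y0 x) K ≥ 1 - α}.Nonempty := by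
      refine ⟨ymax - ymin, by linarith, ?_⟩
      rw [pbar_big N N₁ hN₁pos hN₁lt ymin ymax x _ hYobs]
      linarith
    exact csInf_le_csInf ⟨0, fun K hK => hK.1⟩ hBne hBsub
  refine le_trans hcov (designProb_mono N N₁ _ _ ?_)
  intro x hx hEx
  set K := Kalpha N N₁ ymin ymax α Y1 Y0 x with hKdef
  have hKsK : Ks ≤ K := hKalpha x
  have hD1 : |DIM N Y1 x| ≤ K := le_trans hEx.1 hKsK
  have hD0 : |DIM N Y0 x| ≤ K := le_trans hEx.2 hKsK
  have hgt := grp_ne N N₁ hN₁pos hN₁lt x hx true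
  have hgf := grp_ne N N₁ hN₁pos hN₁lt x hx false
  have hb1 := mean_bounds N x true Y1 (obs N Y1 Y0 x) ymin ymax K hgt (by simpa using hgf)
    hbdd1 (fun i hi => by simp [obs, hi]) (by simpa [DIM] using hD1)
  have hb0 := mean_bounds N x false Y0 (obs N Y1 Y0 x) ymin ymax K hgf (by simpa using hgt)
    hbdd0 (fun i hi => by simp [obs, hi])
    (by rw [abs_sub_comm]; simpa [DIM] using hD0)
  have hsplit : (∑ i, (Y1 i - Y0 i)) / (N:ℝ) = (∑ i, Y1 i)/(N:ℝ) - (∑ i, Y0 i)/(N:ℝ) := by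
    rw [Finset.sum_sub_distrib, sub_div]
  simp only [Cset, Set.mem_Icc, hsplit]
  exact ⟨by linarith [hb1.1, hb0.2], by linarith [hb1.2, hb0.1]⟩
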